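/- Let f : A → A', f' : A' → B and k : C → D be morphisms in K₀. Then e_{f'·f,k} = Sq((f, id_B),k) ∘ e_{f',k}, and the square in V₀ with sides p'₁ : Sq(f',k) → K(A',C), Sq((f,id_B),k) : Sq(f',k) → Sq(f'·f,k), e_{f,k} : K(A',C) → Sq(f,k), and Sq((id_A,f'),k) : Sq(f'·f,k) → Sq(f,k) is a pullback. -/

import Mathlib

/-!
STATEMENT 10: For `f : A ⟶ A'`, `f' : A' ⟶ B` and `k : C ⟶ D` in `K₀`:
`e_{f'·f,k} = Sq((f, id_B),k) ∘ e_{f',k}`, and the square with sides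
`p'₁ : Sq(f',k) ⟶ K(A',C)`, `Sq((f,id_B),k) : Sq(f',k) ⟶ Sq(f'·f,k)`,
`e_{f,k} : K(A',C) ⟶ Sq(f,k)` and `Sq((id_A,f'),k) : Sq(f'·f,k) ⟶ Sq(f,k)`
is a pullback in `𝒱₀`.
-/

open CategoryTheory Category Limits MonoidalCategory

universe v₂ v₁ u₂ u₁

variable (𝒱 : Type u₁) [Category.{v₁} 𝒱] [MonoidalCategory 𝒱] [HasPullbacks 𝒱]
variable {K : Type u₂} [Category.{v₂} K] [EnrichedOrdinaryCategory 𝒱 K]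

/-- The object of squares connecting `f` to `k`. -/
noncomputable def Sq {A B C D : K} (f : A ⟶ B) (k : C ⟶ D) : 𝒱 :=
  pullback (eHomWhiskerLeft 𝒱 A k) (eHomWhiskerRight 𝒱 f D)

/-- First projection `Sq(f,k) ⟶ K(A,C)`. -/
noncomputable def Sq.p₁ {A B C D : K} (f : A ⟶ B) (k : C ⟶ D) :
    Sq 𝒱 f k ⟶ (A ⟶[𝒱] C) :=
  pullback.fst _ _

/-- Second projection `Sq(f,k) ⟶ K(B,D)`. -/
noncomputable def Sq.p₂ {A B C D : K} (f : A ⟶ B) (k : C ⟶ D) :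
    Sq 𝒱 f k ⟶ (B ⟶[𝒱] D) :=
  pullback.snd _ _

/-- The comparison morphism `e_{f,k} : K(B,C) ⟶ Sq(f,k)`. -/
noncomputable def eMor {A B C D : K} (f : A ⟶ B) (k : C ⟶ D) :
    (B ⟶[𝒱] C) ⟶ Sq 𝒱 f k :=
  pullback.lift (eHomWhiskerRight 𝒱 f C) (eHomWhiskerLeft 𝒱 B k)
    (eHom_whisker_exchange 𝒱 f k).symm

/-- Functoriality of `Sq(-,k)`: a commutative square `(g,g') : f ⟶ f'`
induces `Sq((g,g'),k) : Sq(f',k) ⟶ Sq(f,k)`. -/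
noncomputable def SqMap {A B A' B' C D : K} (f : A ⟶ B) (f' : A' ⟶ B')
    (g : A ⟶ A') (g' : B ⟶ B') (hsq : g ≫ f' = f ≫ g') (k : C ⟶ D) :
    Sq 𝒱 f' k ⟶ Sq 𝒱 f k :=
  pullback.lift (Sq.p₁ 𝒱 f' k ≫ eHomWhiskerRight 𝒱 g C)
    (Sq.p₂ 𝒱 f' k ≫ eHomWhiskerRight 𝒱 g' D)
    (by
      dsimp [Sq.p₁, Sq.p₂, Sq]
      rw [assoc, ← eHom_whisker_exchange, ← assoc, pullback.condition, assoc,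
        ← eHomWhiskerRight_comp, hsq, eHomWhiskerRight_comp, assoc])


lemma eMor_p₁ {A B C D : K} (f : A ⟶ B) (k : C ⟶ D) :
    eMor 𝒱 f k ≫ Sq.p₁ 𝒱 f k = eHomWhiskerRight 𝒱 f C :=
  pullback.lift_fst _ _ _

lemma eMor_p₂ {A B C D : K} (f : A ⟶ B) (k : C ⟶ D) :
    eMor 𝒱 f k ≫ Sq.p₂ 𝒱 f k = eHomWhiskerLeft 𝒱 B k :=
  pullback.lift_snd _ _ _

lemma eMor_p₁_assoc {A B C D : K} (f : A ⟶ B) (k : C ⟶ D) {Z : 𝒱} (h : (A ⟶[𝒱] C) ⟶ Z) :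
    eMor 𝒱 f k ≫ Sq.p₁ 𝒱 f k ≫ h = eHomWhiskerRight 𝒱 f C ≫ h := by
  rw [← assoc, eMor_p₁]

lemma eMor_p₂_assoc {A B C D : K} (f : A ⟶ B) (k : C ⟶ D) {Z : 𝒱} (h : (B ⟶[𝒱] D) ⟶ Z) :
    eMor 𝒱 f k ≫ Sq.p₂ 𝒱 f k ≫ h = eHomWhiskerLeft 𝒱 B k ≫ h := by
  rw [← assoc, eMor_p₂]

lemma SqMap_p₁ {A B A' B' C D : K} (f : A ⟶ B) (f' : A' ⟶ B')
    (g : A ⟶ A') (g' : B ⟶ B') (hsq : g ≫ f' = f ≫ g') (k : C ⟶ D) :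
    SqMap 𝒱 f f' g g' hsq k ≫ Sq.p₁ 𝒱 f k = Sq.p₁ 𝒱 f' k ≫ eHomWhiskerRight 𝒱 g C :=
  pullback.lift_fst _ _ _

lemma SqMap_p₂ {A B A' B' C D : K} (f : A ⟶ B) (f' : A' ⟶ B')
    (g : A ⟶ A') (g' : B ⟶ B') (hsq : g ≫ f' = f ≫ g') (k : C ⟶ D) :
    SqMap 𝒱 f f' g g' hsq k ≫ Sq.p₂ 𝒱 f k = Sq.p₂ 𝒱 f' k ≫ eHomWhiskerRight 𝒱 g' D :=
  pullback.lift_snd _ _ _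

lemma SqMap_p₁_assoc {A B A' B' C D : K} (f : A ⟶ B) (f' : A' ⟶ B')
    (g : A ⟶ A') (g' : B ⟶ B') (hsq : g ≫ f' = f ≫ g') (k : C ⟶ D) {Z : 𝒱}
    (h : (A ⟶[𝒱] C) ⟶ Z) :
    SqMap 𝒱 f f' g g' hsq k ≫ Sq.p₁ 𝒱 f k ≫ h = Sq.p₁ 𝒱 f' k ≫ eHomWhiskerRight 𝒱 g C ≫ h := by
  rw [← assoc, SqMap_p₁, assoc]

lemma SqMap_p₂_assoc {A B A' B' C D : K} (f : A ⟶ B) (f' : A' ⟶ B')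
    (g : A ⟶ A') (g' : B ⟶ B') (hsq : g ≫ f' = f ≫ g') (k : C ⟶ D) {Z : 𝒱}
    (h : (B ⟶[𝒱] D) ⟶ Z) :
    SqMap 𝒱 f f' g g' hsq k ≫ Sq.p₂ 𝒱 f k ≫ h = Sq.p₂ 𝒱 f' k ≫ eHomWhiskerRight 𝒱 g' D ≫ h := by
  rw [← assoc, SqMap_p₂, assoc]

lemma Sq_cond {A B C D : K} (f : A ⟶ B) (k : C ⟶ D) :
    Sq.p₁ 𝒱 f k ≫ eHomWhiskerLeft 𝒱 A k = Sq.p₂ 𝒱 f k ≫ eHomWhiskerRight 𝒱 f D :=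
  pullback.condition

lemma Sq_ext {A B C D : K} (f : A ⟶ B) (k : C ⟶ D) {X : 𝒱} (a b : X ⟶ Sq 𝒱 f k)
    (h1 : a ≫ Sq.p₁ 𝒱 f k = b ≫ Sq.p₁ 𝒱 f k) (h2 : a ≫ Sq.p₂ 𝒱 f k = b ≫ Sq.p₂ 𝒱 f k) :
    a = b :=
  pullback.hom_ext h1 h2

noncomputable def SqLift {A B C D : K} (f : A ⟶ B) (k : C ⟶ D) {X : 𝒱} (h : X ⟶ (A ⟶[𝒱] C))
    (k' : X ⟶ (B ⟶[𝒱] D)) (w : h ≫ eHomWhiskerLeft 𝒱 A k = k' ≫ eHomWhiskerRight 𝒱 f D) :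
    X ⟶ Sq 𝒱 f k :=
  pullback.lift h k' w

lemma Sq_lift_p₁ {A B C D : K} (f : A ⟶ B) (k : C ⟶ D) {X : 𝒱} (h : X ⟶ (A ⟶[𝒱] C))
    (k' : X ⟶ (B ⟶[𝒱] D)) (w : h ≫ eHomWhiskerLeft 𝒱 A k = k' ≫ eHomWhiskerRight 𝒱 f D) :
    SqLift 𝒱 f k h k' w ≫ Sq.p₁ 𝒱 f k = h :=
  pullback.lift_fst _ _ _

lemma Sq_lift_p₂ {A B C D : K} (f : A ⟶ B) (k : C ⟶ D) {X : 𝒱} (h : X ⟶ (A ⟶[𝒱] C))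
    (k' : X ⟶ (B ⟶[𝒱] D)) (w : h ≫ eHomWhiskerLeft 𝒱 A k = k' ≫ eHomWhiskerRight 𝒱 f D) :
    SqLift 𝒱 f k h k' w ≫ Sq.p₂ 𝒱 f k = k' :=
  pullback.lift_snd _ _ _

theorem e_comp_eq_and_isPullback
    {A A' B C D : K} (f : A ⟶ A') (f' : A' ⟶ B) (k : C ⟶ D) :
    eMor 𝒱 (f ≫ f') k =
      eMor 𝒱 f' k ≫ SqMap 𝒱 (f ≫ f') f' f (𝟙 B) (by simp) k ∧
    IsPullback (Sq.p₁ 𝒱 f' k) (SqMap 𝒱 (f ≫ f') f' f (𝟙 B) (by simp) k)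
      (eMor 𝒱 f k) (SqMap 𝒱 f (f ≫ f') (𝟙 A) f' (by simp) k) := by

  have hcomm : Sq.p₁ 𝒱 f' k ≫ eMor 𝒱 f k =
      SqMap 𝒱 (f ≫ f') f' f (𝟙 B) (by simp) k ≫
        SqMap 𝒱 f (f ≫ f') (𝟙 A) f' (by simp) k := by
    apply Sq_ext
    · simp only [assoc, eMor_p₁, SqMap_p₁, SqMap_p₁_assoc, eHomWhiskerRight_id, comp_id]
    · simp only [assoc, eMor_p₂, SqMap_p₂, SqMap_p₂_assoc, eHomWhiskerRight_id, id_comp, comp_id]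
      exact Sq_cond 𝒱 f' k
  refine ⟨?_, ?_⟩
  · apply Sq_ext
    · simp only [assoc, eMor_p₁, SqMap_p₁, eMor_p₁_assoc, eHomWhiskerRight_comp]
    · simp only [assoc, eMor_p₂, SqMap_p₂, eMor_p₂_assoc, eHomWhiskerRight_id, comp_id]
  · refine IsPullback.of_isLimit' ⟨hcomm⟩ ?_
    have hp2 : SqMap 𝒱 (f ≫ f') f' f (𝟙 B) (by simp) k ≫
        Sq.p₂ 𝒱 (f ≫ f') k = Sq.p₂ 𝒱 f' k := by
      simp only [SqMap_p₂, eHomWhiskerRight_id, comp_id]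
    refine PullbackCone.IsLimit.mk _ (fun s => SqLift 𝒱 f' k s.fst
      (s.snd ≫ Sq.p₂ 𝒱 (f ≫ f') k) (by
        have h := s.condition =≫ Sq.p₂ 𝒱 f k
        simp only [assoc, eMor_p₂, SqMap_p₂] at h
        rw [assoc]
        exact h)) ?_ ?_ ?_
    · intro s
      exact pullback.lift_fst _ _ _
    · intro s
      apply Sq_ext
      · have h := s.condition =≫ Sq.p₁ 𝒱 f k
        simp only [assoc, eMor_p₁, SqMap_p₁, eHomWhiskerRight_id, comp_id] at h
        simp only [assoc, SqMap_p₁, ← h]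
        simp only [← assoc, Sq_lift_p₁]
      · simp only [assoc, SqMap_p₂, eHomWhiskerRight_id, comp_id, Sq_lift_p₂]
    · intro s m h1 h2
      apply Sq_ext
      · rw [Sq_lift_p₁]
        exact h1
      · have h3 := h2 =≫ Sq.p₂ 𝒱 (f ≫ f') k
        rw [assoc, hp2] at h3
        rw [Sq_lift_p₂]
        exact h3
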